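/- Let C ⊆ ℝ^d be a compact set with a system of balls {S_I} such that: each ball has at most N₀ children; for each n ≥ 1 the level-n balls S_I (|I| = n) are pairwise disjoint and all have the same radius r_n (with r₀ := rad(S_∅)); and sup_{n ≥ 0} r_{n+1}/r_n < 1. Then there is M ∈ ℕ, depending only on N₀, the choice of the norm, and d, such that: if τ := τ(C, {S_I}) > 0, then S := C ∪ (ℝ^d ∖ S_∅) is (1/τ, β, 0, β·rad(S_∅), ℋ_M)-winning for every β ∈ [sup_{n ≥ 0} r_{n+1}/r_n, 1). -/

import Mathlib

open Metric Set Filter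
open scoped ENNReal

/-- A system of balls in a normed space: closed balls indexed by finite words of
natural numbers, each ball containing its finitely many (at least one) children,
with radii tending to zero along infinite words. -/
structure BallSystem (E : Type*) [NormedAddCommGroup E] where
  center : List ℕ → E
  radius : List ℕ → ℝ
  numChildren : List ℕ → ℕ
  radius_pos : ∀ I, 0 < radius I
  numChildren_pos : ∀ I, 0 < numChildren I
  child_subset : ∀ I, ∀ i < numChildren I,
    Metric.closedBall (center (I ++ [i])) (radius (I ++ [i])) ⊆
      Metric.closedBall (center I) (radius I)
  radius_tendsto : ∀ ω : ℕ → ℕ,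
    Filter.Tendsto (fun n => radius (List.ofFn fun k : Fin n => ω k)) Filter.atTop (nhds 0)

namespace BallSystem

variable {E : Type*} [NormedAddCommGroup E]

/-- The ball with index `I`. -/
def ball (B : BallSystem E) (I : List ℕ) : Set E :=
  Metric.closedBall (B.center I) (B.radius I)

/-- A word is valid if each letter indexes an actual child of the preceding prefix. -/
def valid (B : BallSystem E) (I : List ℕ) : Prop :=
  ∀ n : Fin I.length, I.get n < B.numChildren (I.take n.1)

/-- `B` is a system of balls for the set `C`: `C = ⋂_n ⋃_{|I| = n} S_I`. -/
def IsSystemFor (B : BallSystem E) (C : Set E) : Prop :=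
  C = ⋂ n : ℕ, ⋃ I ∈ {I : List ℕ | B.valid I ∧ I.length = n}, B.ball I

/-- `h_I := max_{x ∈ S_I} dist (x, C)`. -/
noncomputable def h (B : BallSystem E) (C : Set E) (I : List ℕ) : ℝ :=
  ⨆ x ∈ B.ball I, infDist x C

/-- The minimum of the radii of the children of `S_I`. -/
noncomputable def minChildRadius (B : BallSystem E) (I : List ℕ) : ℝ :=
  ⨅ i : Fin (B.numChildren I), B.radius (I ++ [i.1])

/-- The thickness of `C` associated to the system of balls `B`, with values in `[0, ∞]`
(the ratio `min_i rad S_{I,i} / h_I` being interpreted as `∞` when `h_I = 0`). -/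
noncomputable def thickness (B : BallSystem E) (C : Set E) : ℝ≥0∞ :=
  ⨅ I : {I : List ℕ // B.valid I},
    ENNReal.ofReal (B.minChildRadius I.1) / ENNReal.ofReal (B.h C I.1)

/-- The system is `r`-uniformly dense: every closed ball contained in `S_I` with radius
at least `r · rad S_I` contains a child of `S_I`. -/
def UniformlyDense (B : BallSystem E) (r : ℝ) : Prop :=
  ∀ I, B.valid I → ∀ (x : E) (ρ : ℝ), Metric.closedBall x ρ ⊆ B.ball I →
    r * B.radius I ≤ ρ → ∃ i < B.numChildren I, B.ball (I ++ [i]) ⊆ Metric.closedBall x ρ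

end BallSystem
/-- The radius associated to an (optional) erased pair `(set, radius)`; `0` if unused. -/
def optRad {E : Type*} (p : Option (Set E × ℝ)) : ℝ := p.elim 0 Prod.snd

/-- The region erased by one of Alice's moves: the union of the closed
`ρ_i`-neighborhoods `N(L_i, ρ_i)` of the chosen sets. -/
def erasedSet {E : Type*} [PseudoEMetricSpace E] (a : ℕ → Option (Set E × ℝ)) : Set E :=
  ⋃ i, (a i).elim ∅ fun p => Metric.cthickening p.2 p.1

/-- Legality of one of Alice's moves in the `(α, β, c, ρ, ℋ)`-potential game, when Bob
has just played a ball of radius `ρm`: each erased set is a closed neighborhood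
`N(L, ρ')` with `L ∈ ℋ` and `ρ' > 0`; if `c > 0` the radii satisfy
`∑ ρ_i^c ≤ (α ρm)^c`, and if `c = 0` Alice erases at most one set, of radius
`≤ α ρm`. (Alice may always pass, by choosing no set at all.) -/
def AliceLegal {E : Type*} (H : Set (Set E)) (α c ρm : ℝ)
    (a : ℕ → Option (Set E × ℝ)) : Prop :=
  (∀ i, ∀ p ∈ a i, p.1 ∈ H ∧ 0 < p.2) ∧
  (if 0 < c then (∑' i, optRad (a i) ^ c) ≤ (α * ρm) ^ c
   else (∀ i, i ≠ 0 → a i = none) ∧ optRad (a 0) ≤ α * ρm)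

/-- `S` is an `(α, β, c, ρ₀, ℋ)`-winning set for the potential game: Alice has a
strategy `σ` (assigning to each history of Bob's balls a countable collection of pairs
`(L_i, ρ_i)`, encoding the erased neighborhoods `N(L_i, ρ_i)`) such that, for every
play of Bob — a sequence of closed balls `B_m = B[x_m, ρ_m]` with `ρ₀ ≤ ρ 0`,
`B_{m+1} ⊆ B_m`, `ρ_{m+1} ≥ β ρ_m` and `ρ_m → 0` — all of Alice's responses are legal,
and any point `z` of `⋂_m B_m` (i.e. the outcome `x_∞`) avoiding all erased sets lies
in `S`. -/
def IsWinning {E : Type*} [NormedAddCommGroup E] (S : Set E) (H : Set (Set E))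
    (α β c ρ₀ : ℝ) : Prop :=
  ∃ σ : List (E × ℝ) → ℕ → Option (Set E × ℝ),
    ∀ (x : ℕ → E) (ρ : ℕ → ℝ),
      (∀ m, 0 < ρ m) →
      ρ₀ ≤ ρ 0 →
      (∀ m, Metric.closedBall (x (m+1)) (ρ (m+1)) ⊆ Metric.closedBall (x m) (ρ m)) →
      (∀ m, β * ρ m ≤ ρ (m+1)) →
      Filter.Tendsto ρ Filter.atTop (nhds 0) →
      (∀ m, AliceLegal H α c (ρ m) (σ (List.ofFn fun k : Fin (m+1) => (x k, ρ k)))) ∧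
      ∀ z : E, (∀ m, z ∈ Metric.closedBall (x m) (ρ m)) →
        z ∉ ⋃ m, erasedSet (σ (List.ofFn fun k : Fin (m+1) => (x k, ρ k))) →
        z ∈ S

/-- `ℋ_M`: the family of all subsets of `E` that are unions of at most `M` spheres. -/
def spheresFamily (E : Type*) [NormedAddCommGroup E] (M : ℕ) : Set (Set E) :=
  {A | ∃ s : Finset (E × ℝ), s.card ≤ M ∧ A = ⋃ p ∈ s, Metric.sphere p.1 p.2}

/-!
Against Bob's ball `B[x, ρ]` Alice picks the level `n` with `r (n + 1) ≤ ρ < r n` and erases the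
`(ρ / τ)`-neighbourhood of the spheres bounding the level-`(n + 1)` balls that meet `B[x, 2ρ]`.
Their parents are disjoint balls of radius `r n` inside `B[x, 4 r n]`, so a volume count leaves at
most `4 ^ d` parents and `N₀ * 4 ^ d` spheres.

If the outcome `z` lies in `S_∅ \ C`, let `S_I` be a ball of the last level `n` containing `z`.
Thickness gives `dist (z, C) ≤ h_I ≤ r (n + 1) / τ`, and the segment from `z` to a nearest point
of `C` crosses the sphere of a level-`(n + 1)` ball within that distance of `z`. At the first turn
with `ρ < r n` we still have `r (n + 1) ≤ ρ`, because both radius sequences shrink by a factor of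
at most `β` per step; at that turn `z` is erased.

When `τ = ∞` the root ball lies in `C`, and when `1 / τ ≥ 1` Alice erases Bob's first ball.
-/
section NormedSpace

variable {E : Type*} [NormedAddCommGroup E] [NormedSpace ℝ E]

theorem exists_mem_sphere_dist_le {z p c : E} {R : ℝ} (hz : R < dist z c) (hp : dist p c ≤ R) :
    ∃ w ∈ sphere c R, dist z w ≤ dist z p := by
  obtain ⟨w, hw, hwR⟩ := (convex_segment z p).isPreconnected.intermediate_value
    (right_mem_segment ℝ z p) (left_mem_segment ℝ z p)
    (continuous_id.dist continuous_const).continuousOn ⟨hp, hz.le⟩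
  exact ⟨w, hwR, by linarith [dist_add_dist_of_mem_segment hw, dist_nonneg (x := w) (y := p)]⟩

theorem radius_le_of_closedBall_subset [Nontrivial E] {c c' : E} {R R' : ℝ} (hR' : 0 ≤ R')
    (h : closedBall c' R' ⊆ closedBall c R) : R' ≤ R := by
  have hR : 0 ≤ R := dist_nonneg.trans (h (mem_closedBall_self hR'))
  have := diam_mono h isBounded_closedBall
  rw [diam_closedBall_eq c' hR', diam_closedBall_eq c hR] at this
  linarith

theorem card_le_of_pairwiseDisjoint_closedBall [FiniteDimensional ℝ E] {ι : Type*} (s : Finset ι)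
    (c : ι → E) {x : E} {R : ℝ} (K : ℕ) (hR : 0 < R)
    (hdisj : (s : Set ι).PairwiseDisjoint fun i => closedBall (c i) R)
    (hsub : ∀ i ∈ s, closedBall (c i) R ⊆ closedBall x (K * R)) :
    s.card ≤ K ^ Module.finrank ℝ E := by
  borelize E
  set μ := MeasureTheory.Measure.addHaar (G := E)
  set V := ENNReal.ofReal (R ^ Module.finrank ℝ E) * μ (ball 0 1)
  have hV0 : V ≠ 0 := mul_ne_zero (by simp [pow_pos hR]) (measure_ball_pos μ 0 one_pos).ne'
  have hVtop : V ≠ ⊤ :=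
    ENNReal.mul_ne_top ENNReal.ofReal_ne_top MeasureTheory.measure_ball_lt_top.ne
  have hvol : (s.card : ℝ≥0∞) * V ≤ (K ^ Module.finrank ℝ E : ℕ) * V := calc
    (s.card : ℝ≥0∞) * V = μ (⋃ i ∈ s, closedBall (c i) R) := by
      rw [MeasureTheory.measure_biUnion_finset hdisj fun _ _ => measurableSet_closedBall]
      simp [μ.addHaar_closedBall _ hR.le, V]
    _ ≤ μ (closedBall x (K * R)) := MeasureTheory.measure_mono (iUnion₂_subset hsub)
    _ = (K ^ Module.finrank ℝ E : ℕ) * V := by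
      rw [μ.addHaar_closedBall _ (by positivity), mul_pow, ENNReal.ofReal_mul (by positivity)]
      simp [V, mul_assoc]
  exact_mod_cast (ENNReal.mul_le_mul_iff_left hV0 hVtop).1 hvol

end NormedSpace

namespace BallSystem

variable {E : Type*} [NormedAddCommGroup E] {B : BallSystem E}

theorem valid_nil : B.valid [] := fun n => absurd n.2 (Nat.not_lt_zero _)

theorem valid_append_singleton {I : List ℕ} {i : ℕ} :
    B.valid (I ++ [i]) ↔ B.valid I ∧ i < B.numChildren I := by
  simp only [valid, Fin.forall_iff, List.get_eq_getElem, List.length_append,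
    List.length_singleton]
  constructor
  · intro h
    refine ⟨fun k hk => ?_, by simpa using h I.length (by omega)⟩
    simpa [List.getElem_append_left hk, List.take_append_of_le_length hk.le] using h k (by omega)
  · rintro ⟨hI, hi⟩ k hk
    rcases (Nat.lt_succ_iff.1 hk).lt_or_eq with hk | rfl
    · simpa [List.getElem_append_left hk, List.take_append_of_le_length hk.le] using hI k hk
    · simpa using hi

theorem valid_replicate (n : ℕ) : B.valid (List.replicate n 0) := by
  induction n with
  | zero => exact valid_nil
  | succ n ih => rw [List.replicate_succ', valid_append_singleton]; exact ⟨ih, B.numChildren_pos _⟩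

theorem exists_eq_append_of_valid {J : List ℕ} (hJ : B.valid J) (hJ₀ : J ≠ []) :
    ∃ I i, J = I ++ [i] ∧ B.valid I ∧ i < B.numChildren I := by
  rw [← List.dropLast_append_getLast hJ₀, valid_append_singleton] at hJ
  exact ⟨_, _, (List.dropLast_append_getLast hJ₀).symm, hJ⟩

theorem finite_setOf_valid_length (n : ℕ) : {I | B.valid I ∧ I.length = n}.Finite := by
  induction n with
  | zero => exact (finite_singleton []).subset fun I hI => List.length_eq_zero_iff.1 hI.2
  | succ n ih =>
    refine (ih.biUnion fun I _ => (finite_Iio (B.numChildren I)).image (I ++ [·])).subset ?_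
    rintro J ⟨hJ, hlen⟩
    obtain ⟨I, i, rfl, hI, hi⟩ :=
      exists_eq_append_of_valid hJ (List.ne_nil_of_length_eq_add_one hlen)
    exact mem_biUnion ⟨hI, by simpa using hlen⟩ ⟨i, hi, rfl⟩

noncomputable def level (B : BallSystem E) (n : ℕ) : Finset (List ℕ) :=
  (B.finite_setOf_valid_length n).toFinset

@[simp]
theorem mem_level {n : ℕ} {I : List ℕ} : I ∈ B.level n ↔ B.valid I ∧ I.length = n :=
  Finite.mem_toFinset _

theorem level_zero : B.level 0 = {[]} := by
  ext I
  simp only [mem_level, List.length_eq_zero_iff, Finset.mem_singleton]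
  exact ⟨And.right, fun h => ⟨h ▸ valid_nil, h⟩⟩

open Classical in
noncomputable def levelMeeting (B : BallSystem E) (n : ℕ) (A : Set E) : Finset (List ℕ) :=
  (B.level n).filter fun I => (B.ball I ∩ A).Nonempty

@[simp]
theorem mem_levelMeeting {n : ℕ} {A : Set E} {I : List ℕ} :
    I ∈ B.levelMeeting n A ↔ (B.valid I ∧ I.length = n) ∧ (B.ball I ∩ A).Nonempty := by
  simp [levelMeeting]

theorem card_levelMeeting_succ_le {N₀ : ℕ} (hN : ∀ I, B.valid I → B.numChildren I ≤ N₀)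
    (n : ℕ) (A : Set E) :
    (B.levelMeeting (n + 1) A).card ≤ N₀ * (B.levelMeeting n A).card := by
  classical
  refine (Finset.card_le_mul_card_image (f := List.dropLast) _ N₀ fun I hI => ?_).trans
    (Nat.mul_le_mul_left _ (Finset.card_le_card ?_))
  · calc _ ≤ ((Finset.range N₀).image (I ++ [·])).card := Finset.card_le_card fun J hJ => by
          simp only [Finset.mem_filter, mem_levelMeeting] at hJ
          obtain ⟨⟨⟨hJv, hlen⟩, -⟩, rfl⟩ := hJ
          obtain ⟨I, i, rfl, hI, hi⟩ :=
            exists_eq_append_of_valid hJv (List.ne_nil_of_length_eq_add_one hlen)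
          exact Finset.mem_image.2 ⟨i, Finset.mem_range.2 (hi.trans_le (hN I hI)), by simp⟩
      _ ≤ N₀ := Finset.card_image_le.trans (Finset.card_range N₀).le
  · intro I hI
    simp only [Finset.mem_image, mem_levelMeeting] at hI ⊢
    obtain ⟨J, ⟨⟨hJv, hlen⟩, y, hyJ, hyA⟩, rfl⟩ := hI
    obtain ⟨I, i, rfl, hI, hi⟩ :=
      exists_eq_append_of_valid hJv (List.ne_nil_of_length_eq_add_one hlen)
    simp only [List.dropLast_concat]
    exact ⟨⟨hI, by simpa using hlen⟩, y, B.child_subset I i hi hyJ, hyA⟩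

theorem IsSystemFor.nonempty [ProperSpace E] {C : Set E} (hsys : B.IsSystemFor C) :
    C.Nonempty := by
  let S (n : ℕ) : Set E := B.ball (List.replicate n 0)
  have hSC : ⋂ n, S n ⊆ C := hsys ▸ iInter_mono fun n => subset_biUnion_of_mem (u := B.ball)
    (show _ ∈ {I | B.valid I ∧ I.length = n} from ⟨valid_replicate n, List.length_replicate⟩)
  have hS (n : ℕ) : S (n + 1) ⊆ S n := by
    simp only [S, List.replicate_succ']
    exact B.child_subset _ 0 (B.numChildren_pos _)
  exact (IsCompact.nonempty_iInter_of_sequence_nonempty_isCompact_isClosed S hS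
    (fun _ => nonempty_closedBall.2 (B.radius_pos _).le) (isCompact_closedBall _ _)
    fun _ => isClosed_closedBall).mono hSC

theorem IsSystemFor.exists_mem_ball {C : Set E} (hsys : B.IsSystemFor C) {p : E} (hp : p ∈ C)
    (n : ℕ) : ∃ J, B.valid J ∧ J.length = n ∧ p ∈ B.ball J := by
  rw [hsys] at hp
  simpa [and_assoc] using mem_iInter.1 hp n

theorem IsSystemFor.exists_mem_ball_forall_notMem {C : Set E} (hsys : B.IsSystemFor C) {z : E}
    (hz : z ∈ B.ball []) (hzC : z ∉ C) :
    ∃ I, B.valid I ∧ z ∈ B.ball I ∧ ∀ J, B.valid J → J.length = I.length + 1 → z ∉ B.ball J := by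
  classical
  have hex : ∃ n, ∀ J, B.valid J → J.length = n → z ∉ B.ball J := by
    by_contra! h
    exact hzC (hsys ▸ mem_iInter.2 fun n => by simpa [and_assoc] using h n)
  obtain ⟨n, hn⟩ : ∃ n, Nat.find hex = n + 1 :=
    Nat.exists_eq_add_one.2 <| Nat.pos_of_ne_zero fun h0 =>
      Nat.find_spec hex [] valid_nil (by simp [h0]) hz
  obtain ⟨I, hI, hlen, hzI⟩ : ∃ I, B.valid I ∧ I.length = n ∧ z ∈ B.ball I := by
    simpa using Nat.find_min hex (m := n) (by omega)
  exact ⟨I, hI, hzI, fun J hJ hJlen => Nat.find_spec hex J hJ (by omega)⟩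

theorem infDist_le_h (C : Set E) {I : List ℕ} {z : E} (hz : z ∈ B.ball I) :
    infDist z C ≤ B.h C I := by
  refine le_ciSup₂ (f := fun x (_ : x ∈ B.ball I) => infDist x C)
    ⟨infDist (B.center I) C + B.radius I, ?_⟩ z hz
  simp only [mem_upperBounds, mem_iUnion, mem_range]
  rintro _ ⟨y, hy, rfl⟩
  exact infDist_le_infDist_add_dist.trans (add_le_add_right hy _)

theorem ofReal_infDist_mul_thickness_le {C : Set E} {I : List ℕ} (hI : B.valid I) {z : E}
    (hz : z ∈ B.ball I) :
    ENNReal.ofReal (infDist z C) * B.thickness C ≤ ENNReal.ofReal (B.minChildRadius I) :=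
  calc ENNReal.ofReal (infDist z C) * B.thickness C
      ≤ ENNReal.ofReal (B.h C I) * B.thickness C := by gcongr; exact infDist_le_h C hz
    _ ≤ ENNReal.ofReal (B.minChildRadius I) :=
      ENNReal.mul_le_of_le_div' (iInf_le_of_le ⟨I, hI⟩ le_rfl)

theorem infDist_le_of_mem_ball {C : Set E} (hτ : B.thickness C ≠ 0) {I : List ℕ}
    (hI : B.valid I) {z : E} (hz : z ∈ B.ball I) :
    infDist z C ≤ (1 / B.thickness C).toReal * B.minChildRadius I := by
  have hle : ENNReal.ofReal (infDist z C) ≤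
      ENNReal.ofReal (B.minChildRadius I) * (1 / B.thickness C) := by
    rw [mul_one_div, ENNReal.le_div_iff_mul_le (Or.inl hτ) (Or.inr ENNReal.ofReal_ne_top)]
    exact ofReal_infDist_mul_thickness_le hI hz
  have hfin : ENNReal.ofReal (B.minChildRadius I) * (1 / B.thickness C) ≠ ⊤ :=
    ENNReal.mul_ne_top ENNReal.ofReal_ne_top (by simpa using hτ)
  have hmin : 0 ≤ B.minChildRadius I := Real.iInf_nonneg fun i => (B.radius_pos _).le
  simpa [ENNReal.toReal_ofReal infDist_nonneg, ENNReal.toReal_mul, ENNReal.toReal_ofReal hmin,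
    mul_comm] using ENNReal.toReal_mono hfin hle

theorem minChildRadius_eq {r : ℕ → ℝ} (hr : ∀ J, B.valid J → B.radius J = r J.length)
    {I : List ℕ} (hI : B.valid I) : B.minChildRadius I = r (I.length + 1) := by
  have : Nonempty (Fin (B.numChildren I)) := ⟨⟨0, B.numChildren_pos I⟩⟩
  simp [minChildRadius, hr _ (valid_append_singleton.2 ⟨hI, Fin.is_lt _⟩)]

end BallSystem

section Game

variable {E : Type*} [NormedAddCommGroup E]

theorem isWinning_univ (H : Set (Set E)) {α : ℝ} (hα : 0 ≤ α) (β ρ₀ : ℝ) :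
    IsWinning univ H α β 0 ρ₀ :=
  ⟨fun _ _ => none, fun _ ρ hρ _ _ _ _ =>
    ⟨fun m => ⟨by simp, by simpa [optRad] using mul_nonneg hα (hρ m).le⟩, fun _ _ _ => trivial⟩⟩

theorem isWinning_of_erase {S : Set E} {H : Set (Set E)} {α β ρ₀ : ℝ} (hα : 0 < α)
    (L : E → ℝ → Set E) (hL : ∀ x ρ, L x ρ ∈ H)
    (hwin : ∀ (x : ℕ → E) (ρ : ℕ → ℝ), (∀ m, 0 < ρ m) → ρ₀ ≤ ρ 0 →
      (∀ m, β * ρ m ≤ ρ (m + 1)) → Tendsto ρ atTop (nhds 0) →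
      ∀ z, (∀ m, z ∈ closedBall (x m) (ρ m)) →
        (∀ m, z ∉ cthickening (α * ρ m) (L (x m) (ρ m))) → z ∈ S) :
    IsWinning S H α β 0 ρ₀ := by
  let σ (l : List (E × ℝ)) (i : ℕ) : Option (Set E × ℝ) :=
    if i = 0 then l.getLast?.map fun p => (L p.1 p.2, α * p.2) else none
  refine ⟨σ, fun x ρ hρ hρ₀ _ hβ hlim => ?_⟩
  have hσ (m : ℕ) : σ (List.ofFn fun k : Fin (m + 1) => (x k, ρ k)) =
      fun i => if i = 0 then some (L (x m) (ρ m), α * ρ m) else none := by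
    simp only [σ]
    rw [List.getLast?_eq_some_getLast (by simp), List.getLast_ofFn_succ]; rfl
  refine ⟨fun m => ?_, fun z hz hzS => hwin x ρ hρ hρ₀ hβ hlim z hz fun m hzm => hzS ?_⟩
  · rw [hσ]
    refine ⟨fun i p hp => ?_, by simp [optRad]⟩
    dsimp only at hp
    split_ifs at hp
    · exact Option.mem_some_iff.1 hp ▸ ⟨hL _ _, mul_pos hα (hρ m)⟩
    · simp at hp
  · exact mem_iUnion.2 ⟨m, hσ m ▸ mem_iUnion.2 ⟨0, hzm⟩⟩

theorem singleton_mem_spheresFamily {M : ℕ} (hM : 1 ≤ M) (x : E) : {x} ∈ spheresFamily E M :=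
  ⟨{(x, 0)}, by simpa using hM, by simp⟩

theorem biUnion_sphere_mem_spheresFamily {ι : Type*} {M : ℕ} {s : Finset ι} (hs : s.card ≤ M)
    (c : ι → E) (R : ι → ℝ) :
    ⋃ i ∈ s, sphere (c i) (R i) ∈ spheresFamily E M := by
  classical
  exact ⟨s.image fun i => (c i, R i), Finset.card_image_le.trans hs, by simp⟩

theorem isWinning_of_one_le (S : Set E) {H : Set (Set E)} (hH : ∀ x : E, {x} ∈ H) {α : ℝ}
    (hα : 1 ≤ α) (β ρ₀ : ℝ) : IsWinning S H α β 0 ρ₀ := by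
  refine isWinning_of_erase (one_pos.trans_le hα) (fun x _ => {x}) (fun x _ => hH x)
    fun x ρ hρ _ _ _ z hz hzS => (hzS 0 ?_).elim
  rw [cthickening_singleton _ (mul_nonneg (zero_le_one.trans hα) (hρ 0).le)]
  exact closedBall_subset_closedBall (le_mul_of_one_le_left (hρ 0).le hα) (hz 0)

end Game

section Radii

/-- Junk value `0` when no `n` satisfies `r (n + 1) ≤ ρ`. -/
noncomputable def levelOf (r : ℕ → ℝ) (ρ : ℝ) : ℕ :=
  sInf {n | r (n + 1) ≤ ρ}

theorem levelOf_eq_zero_or_lt (r : ℕ → ℝ) (ρ : ℝ) : levelOf r ρ = 0 ∨ ρ < r (levelOf r ρ) := by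
  refine (Nat.eq_zero_or_pos _).imp_right fun hpos => ?_
  unfold levelOf at hpos ⊢
  simpa [Nat.sub_add_cancel hpos] using Nat.notMem_of_lt_sInf (Nat.sub_one_lt hpos.ne')

theorem levelOf_eq {r : ℕ → ℝ} (hr : Antitone r) {ρ : ℝ} {n : ℕ} (h₁ : r (n + 1) ≤ ρ)
    (h₂ : ρ < r n) : levelOf r ρ = n :=
  le_antisymm (Nat.sInf_le h₁) <| le_csInf ⟨n, h₁⟩ fun k hk => by
    by_contra! hkn
    exact (h₂.trans_le (hr hkn)).not_ge hk

theorem mul_le_of_iSup_div_le {r : ℕ → ℝ} (hr0 : ∀ n, 0 < r n) (hr : Antitone r) {β : ℝ}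
    (hβ : ⨆ n, r (n + 1) / r n ≤ β) (n : ℕ) : r (n + 1) ≤ β * r n := by
  have hbdd : BddAbove (range fun n => r (n + 1) / r n) :=
    ⟨1, forall_mem_range.2 fun n => div_le_one_of_le₀ (hr n.le_succ) (hr0 n).le⟩
  exact (div_le_iff₀ (hr0 n)).1 ((le_ciSup hbdd n).trans hβ)

theorem exists_le_and_lt {r ρ : ℕ → ℝ} {β : ℝ} (hr : Antitone r) (hβ : 0 ≤ β)
    (hrβ : ∀ n, r (n + 1) ≤ β * r n) (hρ₀ : β * r 0 ≤ ρ 0) (hρβ : ∀ m, β * ρ m ≤ ρ (m + 1))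
    (hρ : Tendsto ρ atTop (nhds 0)) {n : ℕ} (hrn : 0 < r n) :
    ∃ m, r (n + 1) ≤ ρ m ∧ ρ m < r n := by
  classical
  have hex : ∃ m, ρ m < r n := (hρ.eventually (gt_mem_nhds hrn)).exists
  refine ⟨Nat.find hex, (hrβ n).trans ?_, Nat.find_spec hex⟩
  rcases Nat.eq_zero_or_eq_succ_pred (Nat.find hex) with h | h
  · rw [h]
    exact (mul_le_mul_of_nonneg_left (hr (Nat.zero_le n)) hβ).trans hρ₀
  · rw [h]
    have := Nat.find_min hex (h ▸ Nat.lt_succ_self _ : (Nat.find hex).pred < Nat.find hex)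
    exact (mul_le_mul_of_nonneg_left (not_lt.1 this) hβ).trans (hρβ _)

end Radii

namespace BallSystem

variable {E : Type*} [NormedAddCommGroup E] {B : BallSystem E} {r : ℕ → ℝ}

theorem pos_of_radius_eq (hr : ∀ I, B.valid I → B.radius I = r I.length) (n : ℕ) : 0 < r n := by
  simpa [hr _ (valid_replicate n)] using B.radius_pos (List.replicate n 0)

theorem antitone_of_radius_eq [NormedSpace ℝ E] [Nontrivial E]
    (hr : ∀ I, B.valid I → B.radius I = r I.length) : Antitone r :=
  antitone_nat_of_succ_le fun n => by
    have h := B.child_subset (List.replicate n 0) 0 (B.numChildren_pos _)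
    rw [← List.replicate_succ'] at h
    simpa [hr _ (valid_replicate _)] using radius_le_of_closedBall_subset (B.radius_pos _).le h

theorem card_levelMeeting_closedBall_le [NormedSpace ℝ E] [FiniteDimensional ℝ E]
    (hr : ∀ I, B.valid I → B.radius I = r I.length)
    (hdisj : ∀ I J, B.valid I → B.valid J → I.length = J.length → 1 ≤ I.length → I ≠ J →
      B.ball I ∩ B.ball J = ∅)
    {n : ℕ} {x : E} {ρ : ℝ} (hn : n = 0 ∨ ρ < r n) :
    (B.levelMeeting n (closedBall x (2 * ρ))).card ≤ 4 ^ Module.finrank ℝ E := by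
  rcases Nat.eq_zero_or_pos n with rfl | hpos
  · calc _ ≤ (B.level 0).card :=
          Finset.card_le_card fun I hI => mem_level.2 (mem_levelMeeting.1 hI).1
      _ = 1 := by rw [level_zero, Finset.card_singleton]
      _ ≤ _ := Nat.one_le_pow _ _ four_pos
  have hρ : ρ < r n := hn.resolve_left hpos.ne'
  have hball : ∀ I ∈ B.levelMeeting n (closedBall x (2 * ρ)),
      B.valid I ∧ I.length = n ∧ closedBall (B.center I) (r n) = B.ball I :=
    fun I hI => by
      obtain ⟨⟨hI, hlen⟩, -⟩ := mem_levelMeeting.1 hI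
      exact ⟨hI, hlen, by rw [ball, hr I hI, hlen]⟩
  refine card_le_of_pairwiseDisjoint_closedBall _ B.center (x := x) 4 (pos_of_radius_eq hr n) ?_ ?_
  · intro I hI J hJ hIJ
    obtain ⟨hIv, hIlen, hIball⟩ := hball I hI
    obtain ⟨hJv, hJlen, hJball⟩ := hball J hJ
    simp only [Function.onFun, hIball, hJball, disjoint_iff_inter_eq_empty]
    exact hdisj I J hIv hJv (hIlen.trans hJlen.symm) (hIlen ▸ hpos) hIJ
  · intro I hI
    obtain ⟨-, y, hyI, hyx⟩ := mem_levelMeeting.1 hI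
    rw [← (hball I hI).2.2] at hyI
    refine closedBall_subset_closedBall' ?_
    push_cast
    linarith [dist_triangle (B.center I) y x, mem_closedBall'.1 hyI, mem_closedBall.1 hyx]

/-- Alice's move against Bob's ball `B[x, ρ]`. -/
noncomputable def nearbySpheres (B : BallSystem E) (r : ℕ → ℝ) (x : E) (ρ : ℝ) : Set E :=
  ⋃ J ∈ B.levelMeeting (levelOf r ρ + 1) (closedBall x (2 * ρ)), sphere (B.center J) (B.radius J)

theorem nearbySpheres_mem_spheresFamily [NormedSpace ℝ E] [FiniteDimensional ℝ E] {N₀ : ℕ}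
    (hN : ∀ I, B.valid I → B.numChildren I ≤ N₀)
    (hr : ∀ I, B.valid I → B.radius I = r I.length)
    (hdisj : ∀ I J, B.valid I → B.valid J → I.length = J.length → 1 ≤ I.length → I ≠ J →
      B.ball I ∩ B.ball J = ∅) (x : E) (ρ : ℝ) :
    B.nearbySpheres r x ρ ∈ spheresFamily E (N₀ * 4 ^ Module.finrank ℝ E) :=
  biUnion_sphere_mem_spheresFamily ((card_levelMeeting_succ_le hN _ _).trans
    (Nat.mul_le_mul_left _ (card_levelMeeting_closedBall_le hr hdisj
      (levelOf_eq_zero_or_lt r ρ)))) _ _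

theorem isWinning_of_infDist_le [NormedSpace ℝ E] [FiniteDimensional ℝ E] {C : Set E}
    (hC : IsCompact C) (hsys : B.IsSystemFor C) {N₀ : ℕ}
    (hN : ∀ I, B.valid I → B.numChildren I ≤ N₀)
    (hr : ∀ I, B.valid I → B.radius I = r I.length)
    (hdisj : ∀ I J, B.valid I → B.valid J → I.length = J.length → 1 ≤ I.length → I ≠ J →
      B.ball I ∩ B.ball J = ∅)
    (hanti : Antitone r) {β : ℝ} (hβ : 0 ≤ β) (hratio : ∀ n, r (n + 1) ≤ β * r n)
    {α : ℝ} (hα₀ : 0 < α) (hα₁ : α < 1)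
    (hthick : ∀ I, B.valid I → ∀ z ∈ B.ball I, infDist z C ≤ α * r (I.length + 1)) :
    IsWinning (C ∪ (univ \ B.ball [])) (spheresFamily E (N₀ * 4 ^ Module.finrank ℝ E))
      α β 0 (β * B.radius []) := by
  refine isWinning_of_erase hα₀ (B.nearbySpheres r) (nearbySpheres_mem_spheresFamily hN hr hdisj)
    fun x ρ hρ hρ₀ hρβ hρlim z hz hzS => ?_
  by_contra hzS'
  obtain ⟨hzC, hz₀⟩ : z ∉ C ∧ z ∈ B.ball [] := by simpa using hzS'
  obtain ⟨I, hI, hzI, hout⟩ := hsys.exists_mem_ball_forall_notMem hz₀ hzC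
  obtain ⟨p, hpC, hp⟩ := hC.exists_infDist_eq_dist hsys.nonempty z
  obtain ⟨J, hJ, hJlen, hpJ⟩ := hsys.exists_mem_ball hpC (I.length + 1)
  obtain ⟨w, hw, hzw⟩ := exists_mem_sphere_dist_le (not_le.1 (hout J hJ hJlen)) hpJ
  obtain ⟨m, hm₁, hm₂⟩ := exists_le_and_lt hanti hβ hratio
    (by simpa [hr [] valid_nil] using hρ₀) hρβ hρlim (pos_of_radius_eq hr I.length)
  have hzw' : dist z w ≤ α * ρ m :=
    calc dist z w ≤ α * r (I.length + 1) := hzw.trans (hp ▸ hthick I hI z hzI)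
      _ ≤ α * ρ m := by gcongr
  refine hzS m (mem_cthickening_of_dist_le z w _ _ (mem_iUnion₂.2 ⟨J, ?_, hw⟩) hzw')
  rw [levelOf_eq hanti hm₁ hm₂]
  refine mem_levelMeeting.2 ⟨⟨hJ, hJlen⟩, w, sphere_subset_closedBall hw, ?_⟩
  calc dist w (x m) ≤ dist z w + dist z (x m) := dist_triangle_left _ _ _
    _ ≤ α * ρ m + ρ m := add_le_add hzw' (hz m)
    _ ≤ 2 * ρ m := by nlinarith [hρ m]

end BallSystem

/-- Let `C ⊆ ℝ^d` be a compact set with a system of balls in which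
every ball has at most `N₀` children, the level-`n` balls (`n ≥ 1`) are pairwise
disjoint and share the radius `r_n`, and `sup_n r_{n+1}/r_n < 1`. Then there is `M`
(depending only on `N₀`, the norm and `d`) such that, if `τ := τ(C, {S_I}) > 0`, then
`S = C ∪ (ℝ^d \ S_∅)` is `(1/τ, β, 0, β·rad S_∅, ℋ_M)`-winning for every
`β ∈ [sup_n r_{n+1}/r_n, 1)`. -/
theorem winning_of_thickness {E : Type*} [NormedAddCommGroup E] [NormedSpace ℝ E]
    [FiniteDimensional ℝ E] (N₀ : ℕ) :
    ∃ M : ℕ, ∀ (C : Set E), IsCompact C → ∀ B : BallSystem E, B.IsSystemFor C →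
      (∀ I, B.valid I → B.numChildren I ≤ N₀) →
      ∀ r : ℕ → ℝ,
        (∀ I, B.valid I → B.radius I = r I.length) →
        (∀ I J, B.valid I → B.valid J → I.length = J.length → 1 ≤ I.length → I ≠ J →
          B.ball I ∩ B.ball J = ∅) →
        (⨆ n, r (n+1) / r n) < 1 →
        0 < B.thickness C →
        ∀ β : ℝ, (⨆ n, r (n+1) / r n) ≤ β → β < 1 →
          IsWinning (C ∪ (Set.univ \ B.ball [])) (spheresFamily E M)
            (1 / B.thickness C).toReal β 0 (β * B.radius []) := by
  refine ⟨N₀ * 4 ^ Module.finrank ℝ E, fun C hC B hsys hN r hr hdisj _ hτ β hβ _ => ?_⟩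
  have hCne : C.Nonempty := hsys.nonempty
  set α := (1 / B.thickness C).toReal
  have hα₀ : 0 ≤ α := ENNReal.toReal_nonneg
  have hthick : ∀ I, B.valid I → ∀ z ∈ B.ball I, infDist z C ≤ α * r (I.length + 1) :=
    fun I hI z hz => B.minChildRadius_eq hr hI ▸ B.infDist_le_of_mem_ball hτ.ne' hI hz
  have hwin_of_subset (h : B.ball [] ⊆ C) :
      IsWinning (C ∪ (univ \ B.ball [])) (spheresFamily E (N₀ * 4 ^ Module.finrank ℝ E)) α β 0
        (β * B.radius []) := by
    rw [show C ∪ (univ \ B.ball []) = univ from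
      eq_univ_of_forall fun z => (em (z ∈ B.ball [])).imp (h ·) (⟨trivial, ·⟩)]
    exact isWinning_univ _ hα₀ _ _
  rcases subsingleton_or_nontrivial E with hE | hE
  · exact hwin_of_subset fun z _ => Subsingleton.elim hCne.some z ▸ hCne.some_mem
  rcases hα₀.eq_or_lt with hα | hα
  · exact hwin_of_subset fun z hz => (hC.isClosed.mem_iff_infDist_zero hCne).2 <|
      le_antisymm (by simpa [← hα] using hthick [] BallSystem.valid_nil z hz) infDist_nonneg
  rcases le_or_gt 1 α with hα₁ | hα₁
  · exact isWinning_of_one_le _ (singleton_mem_spheresFamily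
      (Nat.mul_pos ((B.numChildren_pos []).trans_le (hN [] BallSystem.valid_nil))
        (pow_pos four_pos _))) hα₁ _ _
  have hr0 := BallSystem.pos_of_radius_eq hr
  have hanti := BallSystem.antitone_of_radius_eq hr
  have hratio := mul_le_of_iSup_div_le hr0 hanti hβ
  exact B.isWinning_of_infDist_le hC hsys hN hr hdisj hanti
    (nonneg_of_mul_nonneg_left ((hr0 1).le.trans (hratio 0)) (hr0 0)) hratio hα hα₁ hthick
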